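/- In a quasitriangular Hopf algebra, uS(u) = S(u)u and this element is central in A. -/

import Mathlib

/-!
Applying `S` to `S² x = u x u⁻¹` and comparing with `S² (S x) = u S(x) u⁻¹` shows that
conjugation by `u` and by `S(u)⁻¹ = S(u⁻¹)` agree on the image of `S`, which is everything
because `S²` is bijective; hence `S(u) u` is central. Since `S² u = u`, the hypothesis at
`x = S(u)` reads `S(u) = u S(u) u⁻¹`.
-/

open TensorProduct HopfAlgebra

namespace HopfAlgebra

variable {R A : Type*} [CommSemiring R] [Semiring A] [HopfAlgebra R A]

theorem antipode_surjective_of_antipode_antipode_eq_conj {u : Aˣ}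
    (hS2 : ∀ x : A, antipode R (antipode R x) = u * x * ↑u⁻¹) :
    Function.Surjective (antipode R : A → A) := fun x =>
  ⟨antipode R (↑u⁻¹ * x * u), by simp [hS2, mul_assoc]⟩

theorem mul_antipode_mul_inv_of_antipode_antipode_eq_conj {u : Aˣ}
    (hS2 : ∀ x : A, antipode R (antipode R x) = u * x * ↑u⁻¹) (y : A) :
    u * antipode R y * ↑u⁻¹ =
      antipode R ((u⁻¹ : Aˣ) : A) * antipode R y * antipode R (u : A) := by
  rw [← hS2, hS2 y, antipode_mul_antidistrib, antipode_mul_antidistrib, mul_assoc]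

theorem commute_antipode_mul_self_of_antipode_antipode_eq_conj {u : Aˣ}
    (hS2 : ∀ x : A, antipode R (antipode R x) = u * x * ↑u⁻¹) (x : A) :
    Commute (antipode R (u : A) * u) x := by
  obtain ⟨y, rfl⟩ := antipode_surjective_of_antipode_antipode_eq_conj hS2 x
  have hinv : antipode R (u : A) * antipode R ((u⁻¹ : Aˣ) : A) = 1 := by
    rw [← antipode_mul_antidistrib, Units.inv_mul, antipode_one]
  calc antipode R (u : A) * u * antipode R y
      = antipode R (u : A) * (u * antipode R y * ↑u⁻¹) * u := by
        simp only [mul_assoc, Units.inv_mul, mul_one]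
    _ = antipode R (u : A) * (antipode R ((u⁻¹ : Aˣ) : A) * antipode R y * antipode R (u : A)) *
          u := by
        rw [mul_antipode_mul_inv_of_antipode_antipode_eq_conj hS2]
    _ = antipode R y * (antipode R (u : A) * u) := by
        simp only [← mul_assoc, hinv, one_mul]

theorem mul_antipode_comm_of_antipode_antipode_eq_conj {u : Aˣ}
    (hS2 : ∀ x : A, antipode R (antipode R x) = u * x * ↑u⁻¹) :
    u * antipode R (u : A) = antipode R (u : A) * u := by
  have hSSu : antipode R (antipode R (u : A)) = u := by simp [hS2, mul_assoc]
  have h := hS2 (antipode R (u : A))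
  rw [hSSu] at h
  conv_rhs => rw [h]
  simp [mul_assoc]

end HopfAlgebra

theorem drinfeld_uSu_central_general
    {k A : Type*} [CommRing k] [Ring A] [HopfAlgebra k A]
    (R : A ⊗[k] A)
    (u uinv : A)
    (huinv : u * uinv = 1) (huinv' : uinv * u = 1)
    (hS2 : ∀ ξ : A, antipode (R := k) (antipode (R := k) ξ) = u * ξ * uinv)
    :
    u * antipode (R := k) u = antipode (R := k) u * u ∧
      ∀ x : A, (u * antipode (R := k) u) * x = x * (u * antipode (R := k) u) := by
  let U : Aˣ := ⟨u, uinv, huinv, huinv'⟩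
  have hcomm : u * antipode k u = antipode k u * u :=
    mul_antipode_comm_of_antipode_antipode_eq_conj (u := U) hS2
  refine ⟨hcomm, fun x => ?_⟩
  rw [hcomm]
  exact commute_antipode_mul_self_of_antipode_antipode_eq_conj (u := U) hS2 x

/-- In a quasitriangular Hopf algebra, `u S(u) = S(u) u` and this element is central in `A`. -/
theorem drinfeld_uSu_central
    {k A : Type*} [CommRing k] [Ring A] [HopfAlgebra k A]
    (R Rinv : A ⊗[k] A)
    (hR : R * Rinv = 1) (hR' : Rinv * R = 1)
    (hQT : ∀ x : A, R * Bialgebra.comulAlgHom k A x =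
      (Algebra.TensorProduct.comm k A A) (Bialgebra.comulAlgHom k A x) * R)
    (hhex1 : (Algebra.TensorProduct.assoc k k k A A A)
        ((Algebra.TensorProduct.map (Bialgebra.comulAlgHom k A) (AlgHom.id k A)) R) =
      (Algebra.TensorProduct.map (AlgHom.id k A)
          (Algebra.TensorProduct.includeRight : A →ₐ[k] A ⊗[k] A)) R *
        (Algebra.TensorProduct.includeRight : (A ⊗[k] A) →ₐ[k] A ⊗[k] (A ⊗[k] A)) R)
    (hhex2 : (Algebra.TensorProduct.map (AlgHom.id k A) (Bialgebra.comulAlgHom k A)) R =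
      (Algebra.TensorProduct.map (AlgHom.id k A)
          (Algebra.TensorProduct.includeRight : A →ₐ[k] A ⊗[k] A)) R *
        (Algebra.TensorProduct.map (AlgHom.id k A)
          (Algebra.TensorProduct.includeLeft : A →ₐ[k] A ⊗[k] A)) R)
    {ι : Type*} [Fintype ι] (a b : ι → A) (hab : R = ∑ i, a i ⊗ₜ[k] b i)
    (u uinv : A) (hu : u = ∑ i, antipode (R := k) (a i) * b i)
    (huinv : u * uinv = 1) (huinv' : uinv * u = 1)
    (hS2 : ∀ ξ : A, antipode (R := k) (antipode (R := k) ξ) = u * ξ * uinv)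
    :
    u * antipode (R := k) u = antipode (R := k) u * u ∧
      ∀ x : A, (u * antipode (R := k) u) * x = x * (u * antipode (R := k) u) :=
  drinfeld_uSu_central_general R u uinv huinv huinv' hS2
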